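/- arXiv:1912.05786 — 8 statements merged into one kernel-verified Lean document; each statement's English description precedes it below -/
import Mathlib

section
/- For every integer k ≥ 5, there exist real numbers λs, λc, λu, each a root of p_k, such that 0 < λs < 1/k < 1 + 1/k < λc < 2 < k/2 < λu < k; moreover every complex root of p_k equals one of λs, λc, λu. In particular, for k ≥ 5 the matrix A_k has three distinct real eigenvalues, none of which has absolute value 1. -/
/-- For an integer `k`, the matrix `A_k` with rows `(k-1, -1, -1)`, `(1, 1, 0)`, `(1, 0, 0)`. -/
def Amat (k : ℤ) : Matrix (Fin 3) (Fin 3) ℤ :=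
  !![k - 1, -1, -1; 1, 1, 0; 1, 0, 0]

/-- The characteristic polynomial `p_k(x) = x^3 - k x^2 + (k+1) x - 1` of `A_k`,
evaluated in any commutative ring. -/
def pk {R : Type*} [CommRing R] (k : ℤ) (x : R) : R :=
  x ^ 3 - (k : R) * x ^ 2 + ((k : R) + 1) * x - 1

/-!
Evaluating `p_k` at `0, 1/k, 1 + 1/k, 2, k/2, k` gives the signs `-, +, +, -, -, +` once `k ≥ 5`,
so the intermediate value theorem yields a real root in each of `(0, 1/k)`, `(1 + 1/k, 2)` and
`(k/2, k)`. A cubic has no further roots: if `a, b, c` are distinct roots then, dividing out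
differences, `a + b + c = k`, so any root other than `a, b` equals `k - a - b = c`.
Each root `x` is an eigenvalue of `A_k`, with eigenvector `(x(x - 1), x, x - 1)`.
-/

theorem map_pk {R S : Type*} [CommRing R] [CommRing S] (f : R →+* S) (k : ℤ) (x : R) :
    f (pk k x) = pk k (f x) := by
  simp [pk]

theorem pk_one {R : Type*} [CommRing R] (k : ℤ) : pk k (1 : R) = 1 := by
  simp only [pk]; ring

section Domain

variable {R : Type*} [CommRing R] [IsDomain R] {k : ℤ} {a b c : R}

theorem quadratic_eq_zero_of_pk_eq_zero (hab : a ≠ b) (ha : pk k a = 0) (hb : pk k b = 0) :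
    a ^ 2 + a * b + b ^ 2 - k * (a + b) + (k + 1) = 0 := by
  have h : (a - b) * (a ^ 2 + a * b + b ^ 2 - k * (a + b) + (k + 1)) = 0 := by
    unfold pk at ha hb
    linear_combination ha - hb
  simpa [sub_ne_zero.mpr hab] using h

theorem add_add_eq_of_pk_eq_zero (hab : a ≠ b) (hac : a ≠ c) (hbc : b ≠ c)
    (ha : pk k a = 0) (hb : pk k b = 0) (hc : pk k c = 0) : a + b + c = k := by
  have h : (b - c) * (a + b + c - k) = 0 := by
    linear_combination
      quadratic_eq_zero_of_pk_eq_zero hab ha hb - quadratic_eq_zero_of_pk_eq_zero hac ha hc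
  simpa [sub_ne_zero.mpr hbc, sub_eq_zero] using h

theorem eq_or_eq_or_eq_of_pk_eq_zero (hab : a ≠ b) (hac : a ≠ c) (hbc : b ≠ c)
    (ha : pk k a = 0) (hb : pk k b = 0) (hc : pk k c = 0) {z : R} (hz : pk k z = 0) :
    z = a ∨ z = b ∨ z = c := by
  by_contra! hne
  have habz := add_add_eq_of_pk_eq_zero hab hne.1.symm hne.2.1.symm ha hb hz
  exact hne.2.2 <|
    add_left_cancel (habz.trans (add_add_eq_of_pk_eq_zero hab hac hbc ha hb hc).symm)

end Domain

theorem hasEigenvalue_Amat_of_pk_eq_zero {K : Type*} [Field K] {k : ℤ} {x : K}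
    (hx : pk k x = 0) :
    Module.End.HasEigenvalue (Matrix.toLin' ((Amat k).map (Int.cast : ℤ → K))) x := by
  have hx1 : x - 1 ≠ 0 := by
    intro h
    rw [sub_eq_zero.mp h, pk_one] at hx
    exact one_ne_zero hx
  refine Module.End.hasEigenvalue_of_hasEigenvector (x := ![x * (x - 1), x, x - 1]) ⟨?_, ?_⟩
  · rw [Module.End.mem_eigenspace_iff, Matrix.toLin'_apply]
    ext i
    fin_cases i <;> simp [Amat, Matrix.mulVec, dotProduct, Fin.sum_univ_three]
    · unfold pk at hx
      linear_combination -hx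
    · ring
  · intro h
    exact hx1 (by simpa using congrFun h 2)

section Real

variable {k : ℤ}

theorem continuous_pk (k : ℤ) : Continuous (pk k : ℝ → ℝ) := by
  unfold pk; fun_prop

theorem pk_ofReal_eq_zero {x : ℝ} (hx : pk k x = 0) : pk k (x : ℂ) = 0 := by
  rw [← Complex.ofRealHom_eq_coe, ← map_pk, hx, map_zero]

theorem pk_inv_pos (hk : 0 < k) : 0 < pk k (1 / (k : ℝ)) := by
  have hK : (0 : ℝ) < k := by exact_mod_cast hk
  have : pk k (1 / (k : ℝ)) = 1 / (k : ℝ) ^ 3 := by unfold pk; field_simp; ring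
  rw [this]; positivity

theorem pk_one_add_inv_pos (hk : 0 < k) : 0 < pk k (1 + 1 / (k : ℝ)) := by
  have hK : (0 : ℝ) < k := by exact_mod_cast hk
  have : pk k (1 + 1 / (k : ℝ)) = (3 * (k : ℝ) ^ 2 + 3 * k + 1) / (k : ℝ) ^ 3 := by
    unfold pk; field_simp; ring
  rw [this]; positivity

theorem pk_two_neg (hk : 5 ≤ k) : pk k (2 : ℝ) < 0 := by
  have hK : (5 : ℝ) ≤ k := by exact_mod_cast hk
  unfold pk; linarith

theorem pk_half_neg (hk : 5 ≤ k) : pk k ((k : ℝ) / 2) < 0 := by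
  have hK : (5 : ℝ) ≤ k := by exact_mod_cast hk
  unfold pk; nlinarith

theorem pk_self_pos (hk : 0 < k) : 0 < pk k (k : ℝ) := by
  have hK : (1 : ℝ) ≤ k := by exact_mod_cast hk
  unfold pk; nlinarith

end Real

/-- For every integer `k ≥ 5` there are real roots `λs, λc, λu` of `p_k` with
`0 < λs < 1/k < 1 + 1/k < λc < 2 < k/2 < λu < k`, and every complex root of `p_k` is one of
them.  In particular `A_k` has three distinct real eigenvalues, none of absolute value `1`. -/
theorem roots_of_pk (k : ℤ) (hk : 5 ≤ k) :
    ∃ ls lc lu : ℝ,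
      pk k ls = 0 ∧ pk k lc = 0 ∧ pk k lu = 0 ∧
      0 < ls ∧ ls < 1 / (k : ℝ) ∧ 1 / (k : ℝ) < 1 + 1 / (k : ℝ) ∧ 1 + 1 / (k : ℝ) < lc ∧
      lc < 2 ∧ (2 : ℝ) < (k : ℝ) / 2 ∧ (k : ℝ) / 2 < lu ∧ lu < (k : ℝ) ∧
      (∀ z : ℂ, pk k z = 0 → z = (ls : ℂ) ∨ z = (lc : ℂ) ∨ z = (lu : ℂ)) ∧
      ls ≠ lc ∧ lc ≠ lu ∧ ls ≠ lu ∧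
      |ls| ≠ 1 ∧ |lc| ≠ 1 ∧ |lu| ≠ 1 ∧
      Module.End.HasEigenvalue (Matrix.toLin' ((Amat k).map (Int.cast : ℤ → ℝ))) ls ∧
      Module.End.HasEigenvalue (Matrix.toLin' ((Amat k).map (Int.cast : ℤ → ℝ))) lc ∧
      Module.End.HasEigenvalue (Matrix.toLin' ((Amat k).map (Int.cast : ℤ → ℝ))) lu := by
  have hK : (5 : ℝ) ≤ k := by exact_mod_cast hk
  have hk0 : 0 < k := by omega
  have hcont := continuous_pk k
  have hinv : 1 / (k : ℝ) ≤ 1 / 5 := one_div_le_one_div_of_le (by norm_num) hK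
  obtain ⟨ls, ⟨hls0, hls1⟩, hls⟩ := intermediate_value_Ioo (by positivity) hcont.continuousOn
    ⟨by simp [pk], pk_inv_pos hk0⟩
  obtain ⟨lc, ⟨hlc0, hlc1⟩, hlc⟩ := intermediate_value_Ioo' (by linarith) hcont.continuousOn
    ⟨pk_two_neg hk, pk_one_add_inv_pos hk0⟩
  obtain ⟨lu, ⟨hlu0, hlu1⟩, hlu⟩ := intermediate_value_Ioo (by linarith) hcont.continuousOn
    ⟨pk_half_neg hk, pk_self_pos hk0⟩
  have hsc : ls ≠ lc := by linarith
  have hcu : lc ≠ lu := by linarith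
  have hsu : ls ≠ lu := by linarith
  refine ⟨ls, lc, lu, hls, hlc, hlu, hls0, hls1, by linarith, hlc0, hlc1, by linarith, hlu0, hlu1,
    fun z hz => eq_or_eq_or_eq_of_pk_eq_zero (Complex.ofReal_injective.ne hsc)
      (Complex.ofReal_injective.ne hsu) (Complex.ofReal_injective.ne hcu)
      (pk_ofReal_eq_zero hls) (pk_ofReal_eq_zero hlc) (pk_ofReal_eq_zero hlu) hz,
    hsc, hcu, hsu, ?_, ?_, ?_, hasEigenvalue_Amat_of_pk_eq_zero hls,
    hasEigenvalue_Amat_of_pk_eq_zero hlc, hasEigenvalue_Amat_of_pk_eq_zero hlu⟩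
  · rw [abs_of_pos hls0]; linarith
  · rw [abs_of_pos (by linarith)]; linarith
  · rw [abs_of_pos (by linarith)]; linarith
end

section
/- Let k be an integer and let λ be a real number with p_k(λ) = 0, λ ≠ 0 and λ ≠ 1. Then the vector v = (1, 1/(λ-1), 1/λ) ∈ ℝ³ is an eigenvector of A_k with eigenvalue λ, i.e. A_k · v = λ · v. -/
/-- For an integer `k`, the real matrix `A_k` with rows `(k-1, -1, -1)`, `(1, 1, 0)`, `(1, 0, 0)`. -/
def AmatR (k : ℤ) : Matrix (Fin 3) (Fin 3) ℝ :=
  !![(k : ℝ) - 1, -1, -1; 1, 1, 0; 1, 0, 0]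

lemma AmatR_mulVec (k : ℤ) (v : Fin 3 → ℝ) :
    (AmatR k).mulVec v = ![((k : ℝ) - 1) * v 0 - v 1 - v 2, v 0 + v 1, v 0] := by
  ext i
  fin_cases i <;> simp [AmatR, Matrix.mulVec, dotProduct, Fin.sum_univ_three, sub_eq_add_neg]

/-- Multiplied by `x (x - 1)`, the difference of the two sides is `-(x³ - k x² + (k + 1) x - 1)`. -/
lemma sub_one_sub_inv_sub_inv_eq_of_cubic_eq_zero {K : Type*} [Field K] {k x : K}
    (hroot : x ^ 3 - k * x ^ 2 + (k + 1) * x - 1 = 0) (h0 : x ≠ 0) (h1 : x ≠ 1) :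
    (k - 1) - 1 / (x - 1) - 1 / x = x := by
  have hx1 : x - 1 ≠ 0 := sub_ne_zero.mpr h1
  field_simp
  linear_combination -hroot

/-- If `λ` is a real root of `p_k(x) = x^3 - k x^2 + (k+1) x - 1` with `λ ≠ 0` and `λ ≠ 1`,
then `v = (1, 1/(λ-1), 1/λ)` is an eigenvector of `A_k` with eigenvalue `λ`. -/
theorem eigenvector_of_root (k : ℤ) (l : ℝ)
    (hroot : l ^ 3 - (k : ℝ) * l ^ 2 + ((k : ℝ) + 1) * l - 1 = 0)
    (h0 : l ≠ 0) (h1 : l ≠ 1) :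
    (AmatR k).mulVec ![1, 1 / (l - 1), 1 / l] = l • ![1, 1 / (l - 1), 1 / l] := by
  have hfirst := sub_one_sub_inv_sub_inv_eq_of_cubic_eq_zero hroot h0 h1
  have hsecond : 1 + 1 / (l - 1) = l * (1 / (l - 1)) := by
    field_simp [sub_ne_zero.mpr h1]
    ring
  rw [AmatR_mulVec]
  simp only [Matrix.smul_cons, Matrix.smul_empty, Matrix.cons_val_zero, Matrix.cons_val_one,
    Matrix.cons_val_two, Matrix.tail_cons, Matrix.head_cons, smul_eq_mul, mul_one]
  rw [hfirst, hsecond, mul_one_div_cancel h0]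
end

section
/- For every ε > 0 there exists an integer K such that for every integer k ≥ K, every real root λ of p_k satisfying 1 < λ < 2 also satisfies λ < 1 + ε. (In other words, the middle eigenvalue λc of A_k converges to 1 as k → ∞.) -/
/-! Rewriting `p_k(λ) = 0` as `λ³ + λ - 1 = k λ (λ - 1)` shows that a root `λ ∈ (1, 2)` satisfies
`k (λ - 1) < k λ (λ - 1) < 9`, so `λ - 1 < 9 / k`. -/

theorem mul_sub_one_lt_nine_of_root {k l : ℝ} (hroot : l ^ 3 - k * l ^ 2 + (k + 1) * l - 1 = 0)
    (h1 : 1 < l) (h2 : l < 2) : k * (l - 1) < 9 := by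
  have hfactor : k * l * (l - 1) = l ^ 3 + l - 1 := by linear_combination -hroot
  have hlt : l ^ 3 + l - 1 < 9 := by nlinarith
  have hpos : 0 < k * (l - 1) := by nlinarith
  nlinarith

/-- The middle eigenvalue of `A_k` converges to `1` as `k → ∞`: for every `ε > 0` there is an
integer `K` such that for all `k ≥ K`, every real root `λ` of
`p_k(x) = x^3 - k x^2 + (k+1) x - 1` with `1 < λ < 2` satisfies `λ < 1 + ε`. -/
theorem middle_root_tendsto_one (ε : ℝ) (hε : 0 < ε) :
    ∃ K : ℤ, ∀ k : ℤ, K ≤ k → ∀ l : ℝ,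
      l ^ 3 - (k : ℝ) * l ^ 2 + ((k : ℝ) + 1) * l - 1 = 0 →
      1 < l → l < 2 → l < 1 + ε := by
  refine ⟨⌈9 / ε⌉, fun k hk l hroot h1 h2 => ?_⟩
  have hkε : 9 ≤ (k : ℝ) * ε := (div_le_iff₀ hε).mp (Int.ceil_le.mp hk)
  have hk : 0 < (k : ℝ) := pos_of_mul_pos_left (by linarith) hε.le
  have hlt : (k : ℝ) * (l - 1) < k * ε := (mul_sub_one_lt_nine_of_root hroot h1 h2).trans_le hkε
  linarith [lt_of_mul_lt_mul_left hlt hk.le]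
end

section
/- Under the stated hypotheses on ρ and φ, the map Ψ maps the solid cylinder 𝒯 bijectively onto 𝒯; for each fixed (x₀, z₀) with x₀² + z₀² ≤ d², the map y ↦ y + ρ(√(x₀² + z₀²))·φ(y) is a strictly increasing bijection of [-a, a] onto itself fixing the endpoints ±a; and Ψ coincides with the identity on the boundary of 𝒯 (the points with x² + z² = d² or y = ±a). -/
lemma fiber_aux (a c : ℝ) (ha : 0 < a) (hc : c ∈ Set.Ioo (-1 : ℝ) 0) (φ : ℝ → ℝ)
    (hφsmooth : ContDiff ℝ (⊤ : ℕ∞) φ) (hφa : φ a = 0) (hφa' : φ (-a) = 0)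
    (hφd : ∀ x ∈ Set.Icc (-a) a, c ≤ deriv φ x)
    (r : ℝ) (hr0 : 0 ≤ r) (hr1 : r ≤ 1) :
    StrictMonoOn (fun y => y + r * φ y) (Set.Icc (-a) a) ∧
    Set.BijOn (fun y => y + r * φ y) (Set.Icc (-a) a) (Set.Icc (-a) a) := by
  have hdφ : Differentiable ℝ φ := hφsmooth.differentiable (by simp)
  have hdiff : Differentiable ℝ (fun y => y + r * φ y) := by
    exact differentiable_id.add ((hdφ.const_mul r))
  have hderiv : ∀ y, deriv (fun y => y + r * φ y) y = 1 + r * deriv φ y := by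
    intro y
    have := (hasDerivAt_id y).add (((hdφ y).hasDerivAt).const_mul r)
    exact this.deriv
  have hpos : ∀ y ∈ Set.Icc (-a) a, 0 < 1 + r * deriv φ y := by
    intro y hy
    have hD := hφd y hy
    nlinarith [hc.1, hc.2, mul_le_mul_of_nonneg_left hD hr0,
      mul_nonneg (sub_nonneg.mpr hr1) (neg_nonneg.mpr hc.2.le)]
  have hmono : StrictMonoOn (fun y => y + r * φ y) (Set.Icc (-a) a) := by
    apply strictMonoOn_of_deriv_pos (convex_Icc _ _) hdiff.continuous.continuousOn
    intro y hy
    rw [interior_Icc] at hy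
    rw [hderiv]
    exact hpos y ⟨hy.1.le, hy.2.le⟩
  have hna : -a ≤ a := by linarith
  have hfa : a + r * φ a = a := by rw [hφa]; ring
  have hfa' : -a + r * φ (-a) = -a := by rw [hφa']; ring
  refine ⟨hmono, ?_, ?_, ?_⟩
  · intro y hy
    have h1 := hmono.monotoneOn (Set.left_mem_Icc.mpr hna) hy hy.1
    have h2 := hmono.monotoneOn hy (Set.right_mem_Icc.mpr hna) hy.2
    constructor
    · show -a ≤ y + r * φ y; linarith
    · show y + r * φ y ≤ a; linarith
  · exact hmono.injOn
  · intro y hy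
    have := intermediate_value_Icc hna hdiff.continuous.continuousOn
    simp only [hfa, hfa'] at this
    exact this hy

/-- The solid cylinder `𝒯 = {(x, y, z) : y ∈ [-a, a], x² + z² ≤ d²}`. -/
def cyl (a d : ℝ) : Set (ℝ × ℝ × ℝ) :=
  {p : ℝ × ℝ × ℝ | p.2.1 ∈ Set.Icc (-a) a ∧ p.1 ^ 2 + p.2.2 ^ 2 ≤ d ^ 2}

/-- The perturbation `Ψ(x, y, z) = (x, y + ρ(√(x² + z²))·φ(y), z)`. -/
noncomputable def Psi (ρ φ : ℝ → ℝ) (p : ℝ × ℝ × ℝ) : ℝ × ℝ × ℝ :=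
  (p.1, p.2.1 + ρ (Real.sqrt (p.1 ^ 2 + p.2.2 ^ 2)) * φ p.2.1, p.2.2)

/-- Under the hypotheses on `ρ` and `φ`: `Ψ` maps the solid cylinder `𝒯` bijectively onto
itself; for each fixed `(x₀, z₀)` with `x₀² + z₀² ≤ d²`, the map
`y ↦ y + ρ(√(x₀² + z₀²))·φ(y)` is a strictly increasing bijection of `[-a, a]` onto itself
fixing `±a`; and `Ψ` is the identity on the boundary of `𝒯`. -/
theorem Psi_bijOn_cyl (a b c d : ℝ) (ha : 1 < a) (hb : b ∈ Set.Ioo 0 a)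
    (hc : c ∈ Set.Ioo (-1 : ℝ) 0) (hd : 0 < d) (ρ φ : ℝ → ℝ)
    (hρsmooth : ContDiff ℝ (⊤ : ℕ∞) ρ) (hρ0 : ρ 0 = 1)
    (hρrange : ∀ x, 0 ≤ ρ x ∧ ρ x ≤ 1)
    (hρzero : ∀ x, d ≤ x → ρ x = 0)
    (hρmono : AntitoneOn ρ (Set.Icc 0 d))
    (hρderiv : ∀ x ∈ Set.Icc 0 d, -4 / d < deriv ρ x ∧ deriv ρ x ≤ 0)
    (hφsmooth : ContDiff ℝ (⊤ : ℕ∞) φ)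
    (hφlin : ∀ x ∈ Set.Icc (-b) b, φ x = c * x)
    (hφa : φ a = 0) (hφa' : φ (-a) = 0)
    (hφda : deriv φ a = 0) (hφda' : deriv φ (-a) = 0)
    (hφderiv : ∀ x ∈ Set.Icc (-a) a, c ≤ deriv φ x ∧ deriv φ x < 2 * (b / (a - b)) * |c|)
    (hφbd : ∀ x ∈ Set.Icc (-a) a, |φ x| < 2 * b * |c|) :
    Set.BijOn (Psi ρ φ) (cyl a d) (cyl a d) ∧
    (∀ x₀ z₀ : ℝ, x₀ ^ 2 + z₀ ^ 2 ≤ d ^ 2 →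
      StrictMonoOn (fun y => y + ρ (Real.sqrt (x₀ ^ 2 + z₀ ^ 2)) * φ y) (Set.Icc (-a) a) ∧
      Set.BijOn (fun y => y + ρ (Real.sqrt (x₀ ^ 2 + z₀ ^ 2)) * φ y)
        (Set.Icc (-a) a) (Set.Icc (-a) a) ∧
      a + ρ (Real.sqrt (x₀ ^ 2 + z₀ ^ 2)) * φ a = a ∧
      -a + ρ (Real.sqrt (x₀ ^ 2 + z₀ ^ 2)) * φ (-a) = -a) ∧
    (∀ p ∈ cyl a d, (p.1 ^ 2 + p.2.2 ^ 2 = d ^ 2 ∨ p.2.1 = a ∨ p.2.1 = -a) →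
      Psi ρ φ p = p) := by
  have ha0 : (0 : ℝ) < a := by linarith
  have key : ∀ r : ℝ, 0 ≤ r → r ≤ 1 →
      StrictMonoOn (fun y => y + r * φ y) (Set.Icc (-a) a) ∧
      Set.BijOn (fun y => y + r * φ y) (Set.Icc (-a) a) (Set.Icc (-a) a) :=
    fun r hr0 hr1 => fiber_aux a c ha0 hc φ hφsmooth hφa hφa'
      (fun x hx => (hφderiv x hx).1) r hr0 hr1
  have keyρ : ∀ t : ℝ,
      StrictMonoOn (fun y => y + ρ t * φ y) (Set.Icc (-a) a) ∧
      Set.BijOn (fun y => y + ρ t * φ y) (Set.Icc (-a) a) (Set.Icc (-a) a) :=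
    fun t => key (ρ t) (hρrange t).1 (hρrange t).2
  refine ⟨⟨?_, ?_, ?_⟩, ?_, ?_⟩
  · -- MapsTo
    rintro ⟨x, y, z⟩ ⟨hy, hxz⟩
    exact ⟨(keyρ (Real.sqrt (x ^ 2 + z ^ 2))).2.1 hy, hxz⟩
  · -- InjOn
    rintro ⟨x, y, z⟩ ⟨hy, hxz⟩ ⟨x', y', z'⟩ ⟨hy', hxz'⟩ heq
    simp only [Psi, Prod.mk.injEq] at heq
    obtain ⟨h1, h2, h3⟩ := heq
    subst h1; subst h3
    have := (keyρ (Real.sqrt (x ^ 2 + z ^ 2))).2.2.1 hy hy' h2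
    simpa using this
  · -- SurjOn
    rintro ⟨x, y, z⟩ ⟨hy, hxz⟩
    obtain ⟨y', hy', hfy'⟩ := (keyρ (Real.sqrt (x ^ 2 + z ^ 2))).2.2.2 hy
    exact ⟨(x, y', z), ⟨hy', hxz⟩, by simp [Psi, hfy']⟩
  · -- fiber statement
    intro x₀ z₀ _
    exact ⟨(keyρ _).1, (keyρ _).2, by rw [hφa]; ring, by rw [hφa']; ring⟩
  · -- boundary
    rintro ⟨x, y, z⟩ ⟨hy, hxz⟩ hbd
    rcases hbd with h | h | h
    · have hs : Real.sqrt (x ^ 2 + z ^ 2) = d := by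
        rw [h, Real.sqrt_sq hd.le]
      simp [Psi, hs, hρzero d le_rfl]
    · dsimp only at h; subst h; simp [Psi, hφa]
    · dsimp only at h; subst h; simp [Psi, hφa']
end

section
/- Under the stated hypotheses on ρ and φ, at every point (x, y, z) of 𝒯 with r = √(x² + z²) ∈ (0, d) and y ∈ (-a, a), the map Ψ is differentiable, its derivative in the standard basis is the matrix with rows (1, 0, 0), (C₁, C₂, C₃), (0, 0, 1), where C₁ = φ(y)·ρ'(r)·x/r, C₂ = 1 + ρ(r)·φ'(y), C₃ = φ(y)·ρ'(r)·z/r; moreover 1 + c ≤ C₂ ≤ 1 + 2·(b/(a-b))·|c|, |C₁| ≤ 8·(b/d)·|c| and |C₃| ≤ 8·(b/d)·|c|; in particular the Jacobian determinant of Ψ at such a point equals C₂ and satisfies det ≥ 1 + c > 0. -/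
/-- The perturbation `Ψ(x, y, z) = (x, y + ρ(√(x² + z²))·φ(y), z)` as a map `ℝ³ → ℝ³`. -/
noncomputable def PsiV (ρ φ : ℝ → ℝ) (v : Fin 3 → ℝ) : Fin 3 → ℝ :=
  ![v 0, v 1 + ρ (Real.sqrt (v 0 ^ 2 + v 2 ^ 2)) * φ (v 1), v 2]

set_option maxHeartbeats 1600000 in
/-- At every interior point of the cylinder with `r = √(x² + z²) ∈ (0, d)` and `y ∈ (-a, a)`,
`Ψ` is differentiable with derivative the matrix with rows `(1,0,0)`, `(C₁,C₂,C₃)`, `(0,0,1)`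
where `C₁ = φ(y)ρ'(r)x/r`, `C₂ = 1 + ρ(r)φ'(y)`, `C₃ = φ(y)ρ'(r)z/r`; moreover
`1 + c ≤ C₂ ≤ 1 + 2(b/(a-b))|c|`, `|C₁| ≤ 8(b/d)|c|`, `|C₃| ≤ 8(b/d)|c|`, and the Jacobian
determinant equals `C₂ ≥ 1 + c > 0`. -/
theorem Psi_hasFDerivAt (a b c d : ℝ) (ha : 1 < a) (hb : b ∈ Set.Ioo 0 a)
    (hc : c ∈ Set.Ioo (-1 : ℝ) 0) (hd : 0 < d) (ρ φ : ℝ → ℝ)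
    (hρsmooth : ContDiff ℝ (⊤ : ℕ∞) ρ) (hρ0 : ρ 0 = 1)
    (hρrange : ∀ x, 0 ≤ ρ x ∧ ρ x ≤ 1)
    (hρzero : ∀ x, d ≤ x → ρ x = 0)
    (hρmono : AntitoneOn ρ (Set.Icc 0 d))
    (hρderiv : ∀ x ∈ Set.Icc 0 d, -4 / d < deriv ρ x ∧ deriv ρ x ≤ 0)
    (hφsmooth : ContDiff ℝ (⊤ : ℕ∞) φ)
    (hφlin : ∀ x ∈ Set.Icc (-b) b, φ x = c * x)
    (hφa : φ a = 0) (hφa' : φ (-a) = 0)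
    (hφda : deriv φ a = 0) (hφda' : deriv φ (-a) = 0)
    (hφderiv : ∀ x ∈ Set.Icc (-a) a, c ≤ deriv φ x ∧ deriv φ x < 2 * (b / (a - b)) * |c|)
    (hφbd : ∀ x ∈ Set.Icc (-a) a, |φ x| < 2 * b * |c|)
    (x y z : ℝ) (hr : Real.sqrt (x ^ 2 + z ^ 2) ∈ Set.Ioo 0 d) (hy : y ∈ Set.Ioo (-a) a) :
    HasFDerivAt (PsiV ρ φ)
      (LinearMap.toContinuousLinearMap (Matrix.toLin'
        !![1, 0, 0;
           φ y * deriv ρ (Real.sqrt (x ^ 2 + z ^ 2)) * (x / Real.sqrt (x ^ 2 + z ^ 2)),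
             1 + ρ (Real.sqrt (x ^ 2 + z ^ 2)) * deriv φ y,
             φ y * deriv ρ (Real.sqrt (x ^ 2 + z ^ 2)) * (z / Real.sqrt (x ^ 2 + z ^ 2));
           0, 0, 1]))
      ![x, y, z] ∧
    1 + c ≤ 1 + ρ (Real.sqrt (x ^ 2 + z ^ 2)) * deriv φ y ∧
    1 + ρ (Real.sqrt (x ^ 2 + z ^ 2)) * deriv φ y ≤ 1 + 2 * (b / (a - b)) * |c| ∧
    |φ y * deriv ρ (Real.sqrt (x ^ 2 + z ^ 2)) * (x / Real.sqrt (x ^ 2 + z ^ 2))|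
      ≤ 8 * (b / d) * |c| ∧
    |φ y * deriv ρ (Real.sqrt (x ^ 2 + z ^ 2)) * (z / Real.sqrt (x ^ 2 + z ^ 2))|
      ≤ 8 * (b / d) * |c| ∧
    Matrix.det
      !![1, 0, 0;
         φ y * deriv ρ (Real.sqrt (x ^ 2 + z ^ 2)) * (x / Real.sqrt (x ^ 2 + z ^ 2)),
           1 + ρ (Real.sqrt (x ^ 2 + z ^ 2)) * deriv φ y,
           φ y * deriv ρ (Real.sqrt (x ^ 2 + z ^ 2)) * (z / Real.sqrt (x ^ 2 + z ^ 2));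
         0, 0, 1]
      = 1 + ρ (Real.sqrt (x ^ 2 + z ^ 2)) * deriv φ y ∧
    0 < 1 + c := by
  set r := Real.sqrt (x ^ 2 + z ^ 2) with hrdef
  have hr0 : 0 < r := hr.1
  have hrd : r < d := hr.2
  have hsq : x ^ 2 + z ^ 2 ≠ 0 := by
    intro h
    rw [hrdef, h, Real.sqrt_zero] at hr0
    exact lt_irrefl _ hr0
  have hr2 : r ^ 2 = x ^ 2 + z ^ 2 := Real.sq_sqrt (by positivity)
  have hrne : r ≠ 0 := ne_of_gt hr0
  have hρr := hρrange r
  have hdρ := hρderiv r ⟨le_of_lt hr0, le_of_lt hrd⟩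
  have hdφ := hφderiv y ⟨le_of_lt hy.1, le_of_lt hy.2⟩
  have hφy := hφbd y ⟨le_of_lt hy.1, le_of_lt hy.2⟩
  have hab : 0 < a - b := sub_pos.mpr hb.2
  have hcpos : 0 < |c| := abs_pos.mpr (ne_of_lt hc.2)
  have hρ'bd : |deriv ρ r| ≤ 4 / d := by
    rw [abs_le]
    refine ⟨?_, ?_⟩
    · have h := hdρ.1
      have : (-(4 / d) : ℝ) = -4 / d := by ring
      linarith [this ▸ h]
    · have h0 : (0:ℝ) ≤ 4 / d := div_nonneg (by norm_num) hd.le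
      linarith [hdρ.2]
  have hA0 : (0:ℝ) ≤ 2 * b * |c| :=
    mul_nonneg (by linarith [hb.1]) (abs_nonneg c)
  have hB0 : (0:ℝ) ≤ 4 / d := div_nonneg (by norm_num) hd.le
  refine ⟨?_, ?_, ?_, ?_, ?_, ?_, ?_⟩
  · -- differentiability
    rw [hasFDerivAt_pi']
    have hp0 : HasFDerivAt (fun v : Fin 3 → ℝ => v 0)
        (ContinuousLinearMap.proj (0 : Fin 3) : (Fin 3 → ℝ) →L[ℝ] ℝ) (![x, y, z]) :=
      (ContinuousLinearMap.proj (0 : Fin 3) : (Fin 3 → ℝ) →L[ℝ] ℝ).hasFDerivAt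
    have hp1 : HasFDerivAt (fun v : Fin 3 → ℝ => v 1)
        (ContinuousLinearMap.proj (1 : Fin 3) : (Fin 3 → ℝ) →L[ℝ] ℝ) (![x, y, z]) :=
      (ContinuousLinearMap.proj (1 : Fin 3) : (Fin 3 → ℝ) →L[ℝ] ℝ).hasFDerivAt
    have hp2 : HasFDerivAt (fun v : Fin 3 → ℝ => v 2)
        (ContinuousLinearMap.proj (2 : Fin 3) : (Fin 3 → ℝ) →L[ℝ] ℝ) (![x, y, z]) :=
      (ContinuousLinearMap.proj (2 : Fin 3) : (Fin 3 → ℝ) →L[ℝ] ℝ).hasFDerivAt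
    have hq : HasFDerivAt (fun v : Fin 3 → ℝ => (v 0) ^ 2 + (v 2) ^ 2)
        ((x • (ContinuousLinearMap.proj (0 : Fin 3) : (Fin 3 → ℝ) →L[ℝ] ℝ) + x • (ContinuousLinearMap.proj (0 : Fin 3) : (Fin 3 → ℝ) →L[ℝ] ℝ)) +
          (z • (ContinuousLinearMap.proj (2 : Fin 3) : (Fin 3 → ℝ) →L[ℝ] ℝ) + z • (ContinuousLinearMap.proj (2 : Fin 3) : (Fin 3 → ℝ) →L[ℝ] ℝ)))
        (![x, y, z]) := by
      have h1 := (hp0.mul hp0).add (hp2.mul hp2)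
      simp only [show (![x, y, z] : Fin 3 → ℝ) 0 = x from rfl,
        show (![x, y, z] : Fin 3 → ℝ) 2 = z from rfl] at h1
      have heq : (fun v : Fin 3 → ℝ => (v 0) ^ 2 + (v 2) ^ 2)
          = fun v : Fin 3 → ℝ => v 0 * v 0 + v 2 * v 2 := by
        funext v; ring
      rw [heq]
      exact h1
    have hsqrt : HasFDerivAt (fun v : Fin 3 → ℝ => Real.sqrt ((v 0) ^ 2 + (v 2) ^ 2))
        ((1 / (2 * r)) • ((x • (ContinuousLinearMap.proj (0 : Fin 3) : (Fin 3 → ℝ) →L[ℝ] ℝ) + x • (ContinuousLinearMap.proj (0 : Fin 3) : (Fin 3 → ℝ) →L[ℝ] ℝ)) +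
          (z • (ContinuousLinearMap.proj (2 : Fin 3) : (Fin 3 → ℝ) →L[ℝ] ℝ) + z • (ContinuousLinearMap.proj (2 : Fin 3) : (Fin 3 → ℝ) →L[ℝ] ℝ))))
        (![x, y, z]) :=
      (Real.hasDerivAt_sqrt hsq).comp_hasFDerivAt (![x, y, z]) hq
    have hρg : HasFDerivAt (fun v : Fin 3 → ℝ => ρ (Real.sqrt ((v 0) ^ 2 + (v 2) ^ 2)))
        (deriv ρ r • (1 / (2 * r)) •
          ((x • (ContinuousLinearMap.proj (0 : Fin 3) : (Fin 3 → ℝ) →L[ℝ] ℝ) + x • (ContinuousLinearMap.proj (0 : Fin 3) : (Fin 3 → ℝ) →L[ℝ] ℝ)) +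
          (z • (ContinuousLinearMap.proj (2 : Fin 3) : (Fin 3 → ℝ) →L[ℝ] ℝ) + z • (ContinuousLinearMap.proj (2 : Fin 3) : (Fin 3 → ℝ) →L[ℝ] ℝ))))
        (![x, y, z]) := by
      have hρd : HasDerivAt ρ (deriv ρ r) r :=
        ((hρsmooth.differentiable (by simp)) r).hasDerivAt
      exact hρd.comp_hasFDerivAt (![x, y, z]) hsqrt
    have hφ1 : HasFDerivAt (fun v : Fin 3 → ℝ => φ (v 1))
        (deriv φ y • (ContinuousLinearMap.proj (1 : Fin 3) : (Fin 3 → ℝ) →L[ℝ] ℝ)) (![x, y, z]) := by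
      have hφd : HasDerivAt φ (deriv φ y) y :=
        ((hφsmooth.differentiable (by simp)) y).hasDerivAt
      exact hφd.comp_hasFDerivAt (![x, y, z]) hp1
    have hmid := hp1.add (hρg.mul hφ1)
    intro i
    fin_cases i
    · refine hp0.congr_fderiv ?_
      refine ContinuousLinearMap.ext fun w => ?_
      simp [Matrix.toLin'_apply, Matrix.mulVec, dotProduct, Fin.sum_univ_three, Matrix.vecHead, Matrix.vecTail]
    · refine hmid.congr_fderiv ?_
      refine ContinuousLinearMap.ext fun w => ?_
      simp only [ContinuousLinearMap.add_apply, ContinuousLinearMap.smul_apply,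
        ContinuousLinearMap.proj_apply, ContinuousLinearMap.coe_comp', Function.comp_apply,
        LinearMap.coe_toContinuousLinearMap', Matrix.toLin'_apply, smul_eq_mul,
        show (![x, y, z] : Fin 3 → ℝ) 0 = x from rfl,
        show (![x, y, z] : Fin 3 → ℝ) 1 = y from rfl,
        show (![x, y, z] : Fin 3 → ℝ) 2 = z from rfl]
      rw [Matrix.mulVec]
      simp only [dotProduct, Fin.sum_univ_three, ← hrdef]
      simp [Matrix.cons_val_zero, Matrix.cons_val_one, Matrix.vecHead, Matrix.vecTail]
      field_simp
      ring
    · refine hp2.congr_fderiv ?_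
      refine ContinuousLinearMap.ext fun w => ?_
      simp [Matrix.toLin'_apply, Matrix.mulVec, dotProduct, Fin.sum_univ_three, Matrix.vecHead, Matrix.vecTail]
  · nlinarith [hρr.1, hρr.2, hdφ.1, hc.2]
  · have hB : 0 < 2 * (b / (a - b)) * |c| :=
      mul_pos (mul_pos two_pos (div_pos hb.1 hab)) hcpos
    nlinarith [hρr.1, hρr.2, hdφ.1, hdφ.2, hB]
  · have hxr : |x / r| ≤ 1 := by
      rw [abs_div, abs_of_pos hr0, div_le_one hr0]
      nlinarith [abs_nonneg x, sq_abs x, sq_nonneg z, hr2, hr0]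
    have h1 : |φ y| * |deriv ρ r| ≤ (2 * b * |c|) * (4 / d) :=
      mul_le_mul hφy.le hρ'bd (abs_nonneg _) hA0
    have h2 : (|φ y| * |deriv ρ r|) * |x / r| ≤ ((2 * b * |c|) * (4 / d)) * 1 :=
      mul_le_mul h1 hxr (abs_nonneg _) (mul_nonneg hA0 hB0)
    calc |φ y * deriv ρ r * (x / r)| = |φ y| * |deriv ρ r| * |x / r| := by
          rw [abs_mul, abs_mul]
      _ ≤ ((2 * b * |c|) * (4 / d)) * 1 := h2
      _ = 8 * (b / d) * |c| := by field_simp; ring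
  · have hzr : |z / r| ≤ 1 := by
      rw [abs_div, abs_of_pos hr0, div_le_one hr0]
      nlinarith [abs_nonneg z, sq_abs z, sq_nonneg x, hr2, hr0]
    have h1 : |φ y| * |deriv ρ r| ≤ (2 * b * |c|) * (4 / d) :=
      mul_le_mul hφy.le hρ'bd (abs_nonneg _) hA0
    have h2 : (|φ y| * |deriv ρ r|) * |z / r| ≤ ((2 * b * |c|) * (4 / d)) * 1 :=
      mul_le_mul h1 hzr (abs_nonneg _) (mul_nonneg hA0 hB0)
    calc |φ y * deriv ρ r * (z / r)| = |φ y| * |deriv ρ r| * |z / r| := by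
          rw [abs_mul, abs_mul]
      _ ≤ ((2 * b * |c|) * (4 / d)) * 1 := h2
      _ = 8 * (b / d) * |c| := by field_simp; ring
  · rw [Matrix.det_fin_three]
    simp
  · linarith [hc.1]
end

section
/- Let A > 0, Θ ∈ [0, 1), M₀ > 0, and let P, Q be real numbers with |Q| ≤ Θ·A and |P| ≤ M₀·A. Set K = 2·M₀/(1 - Θ). Then for every (u, v) ∈ ℝ² with u ≠ 0 and |v| ≤ K·|u|, the image (u', v') = (A·u, P·u + Q·v) under the lower-triangular matrix with rows (A, 0), (P, Q) satisfies u' ≠ 0 and |v'| < K·|u'|. (Hence the cone {(u, v) : |v| ≤ K·|u|} is mapped strictly into its interior.) -/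
/-! With `K = 2M₀/(1-Θ)` one has `(1-Θ)K = 2M₀ > M₀`, i.e. `M₀ + ΘK < K`: the gain `M₀ + ΘK`
by which the map stretches the slope bound of the cone is strictly below the slope `K` itself. -/

lemma abs_add_mul_le_of_abs_le_mul {P Q K u v : ℝ} (hv : |v| ≤ K * |u|) :
    |P * u + Q * v| ≤ (|P| + |Q| * K) * |u| :=
  calc |P * u + Q * v| ≤ |P| * |u| + |Q| * |v| := by
        simpa only [abs_mul] using abs_add_le (P * u) (Q * v)
    _ ≤ |P| * |u| + |Q| * (K * |u|) := by gcongr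
    _ = (|P| + |Q| * K) * |u| := by ring

lemma abs_lower_triangular_lt {A Θ M₀ P Q K u v : ℝ} (hA : 0 < A) (hQ : |Q| ≤ Θ * A)
    (hP : |P| ≤ M₀ * A) (hK : M₀ + Θ * K < K) (hu : u ≠ 0) (hv : |v| ≤ K * |u|) :
    |P * u + Q * v| < K * |A * u| := by
  have hu' : 0 < |u| := abs_pos.mpr hu
  have hK₀ : 0 ≤ K := nonneg_of_mul_nonneg_left ((abs_nonneg v).trans hv) hu'
  calc |P * u + Q * v| ≤ (|P| + |Q| * K) * |u| := abs_add_mul_le_of_abs_le_mul hv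
    _ ≤ (M₀ * A + Θ * A * K) * |u| := by gcongr
    _ = (M₀ + Θ * K) * (A * |u|) := by ring
    _ < K * (A * |u|) := by gcongr
    _ = K * |A * u| := by rw [abs_mul, abs_of_pos hA]

lemma add_mul_two_mul_div_one_sub_lt {Θ M₀ : ℝ} (hΘ : Θ < 1) (hM₀ : 0 < M₀) :
    M₀ + Θ * (2 * M₀ / (1 - Θ)) < 2 * M₀ / (1 - Θ) := by
  have h : 0 < 1 - Θ := sub_pos.mpr hΘ
  rw [← sub_pos]
  calc (0 : ℝ) < M₀ := hM₀
    _ = 2 * M₀ / (1 - Θ) - (M₀ + Θ * (2 * M₀ / (1 - Θ))) := by field_simp; ring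

/-- Cone invariance for lower-triangular matrices: if `|Q| ≤ Θ·A`, `|P| ≤ M₀·A` with
`Θ ∈ [0,1)`, `A, M₀ > 0`, and `K = 2M₀/(1-Θ)`, then the map `(u,v) ↦ (A·u, P·u + Q·v)`
maps the cone `{|v| ≤ K·|u|}` strictly into its interior. -/
theorem cone_invariance (A Θ M₀ P Q : ℝ) (hA : 0 < A) (hΘ : Θ ∈ Set.Ico (0 : ℝ) 1)
    (hM₀ : 0 < M₀) (hQ : |Q| ≤ Θ * A) (hP : |P| ≤ M₀ * A) :
    ∀ u v : ℝ, u ≠ 0 → |v| ≤ (2 * M₀ / (1 - Θ)) * |u| →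
      A * u ≠ 0 ∧ |P * u + Q * v| < (2 * M₀ / (1 - Θ)) * |A * u| := fun _ _ hu hv =>
  ⟨mul_ne_zero hA.ne' hu,
    abs_lower_triangular_lt hA hQ hP (add_mul_two_mul_div_one_sub_lt hΘ.2 hM₀) hu hv⟩
end

section
/- For all a > 0 and B > 0 there exists ρ > 0 with the following property: for every sequence (b_j)_{j≥1} of real numbers with |b_j| ≤ B for all j and limsup_{n→∞} (1/n)·Σ_{j=1}^{n} b_j < -a, the set H = {n ≥ 1 : Σ_{j=n-k+1}^{n} b_j ≤ -(a/2)·k for every integer k with 1 ≤ k ≤ n} satisfies liminf_{n→∞} #(H ∩ {1, …, n})/n ≥ ρ; in particular H is infinite. -/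
/-!
With `S n = Σ_{j=1}^{n} (b_j + a/2)`, `n` is a hyperbolic time exactly when `S n` is a record
minimum, `S n ≤ S m` for all `m < n`. The minimum of `S` over `[0, n]` can only move down at
record times, and then by at most `B`, so `S n ≥ -B · #(records in [1, n])`. The limsup
hypothesis gives `S n < -(a/2) n` for large `n`, so the records have density at least `a/(2B)`.
-/

open Filter

/-- The set of `(a/2)`-hyperbolic times of a sequence `(b_j)_{j ≥ 1}`: those `n ≥ 1` with
`Σ_{j=n-k+1}^{n} b_j ≤ -(a/2)·k` for every `1 ≤ k ≤ n`. -/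
def hypTimes (a : ℝ) (b : ℕ → ℝ) : Set ℕ :=
  {n : ℕ | 1 ≤ n ∧ ∀ k : ℕ, 1 ≤ k → k ≤ n →
    ∑ j ∈ Finset.Icc (n - k + 1) n, b j ≤ -(a / 2) * k}

def recordMinima (S : ℕ → ℝ) : Set ℕ := {n | ∀ m < n, S n ≤ S m}

theorem sub_ncard_recordMinima_mul_le {S : ℕ → ℝ} {D : ℝ} (hstep : ∀ n, S n - D ≤ S (n + 1))
    {N k : ℕ} (hk : k ≤ N) :
    S 0 - (recordMinima S ∩ Set.Icc 1 N).ncard * D ≤ S k := by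
  induction N generalizing k with
  | zero => simp [Nat.le_zero.mp hk]
  | succ N ih =>
    rw [← Set.insert_Icc_right_eq_Icc_add_one (by omega)]
    by_cases hrec : N + 1 ∈ recordMinima S
    · rw [Set.inter_insert_of_mem hrec, Set.ncard_insert_of_notMem (by simp)
        ((Set.finite_Icc 1 N).inter_of_right _)]
      have hlast : S 0 - ((recordMinima S ∩ Set.Icc 1 N).ncard + 1 : ℕ) * D ≤ S (N + 1) := by
        push_cast; linarith [ih le_rfl, hstep N]
      rcases hk.lt_or_eq with hk | rfl
      · exact hlast.trans (hrec k hk)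
      · exact hlast
    · rw [Set.inter_insert_of_notMem hrec]
      rcases hk.lt_or_eq with hk | rfl
      · exact ih (Nat.lt_succ_iff.mp hk)
      · obtain ⟨m, hm, hlt⟩ : ∃ m < N + 1, S m < S (N + 1) := by
          simpa [recordMinima] using hrec
        exact (ih (Nat.lt_succ_iff.mp hm)).trans hlt.le

theorem sum_Ioc_add_const (b : ℕ → ℝ) (c : ℝ) (m n : ℕ) :
    ∑ j ∈ Finset.Ioc m n, (b j + c) = ∑ j ∈ Finset.Icc (m + 1) n, b j + c * (n - m : ℕ) := by
  rw [Finset.sum_add_distrib, Finset.sum_const, Nat.card_Ioc, nsmul_eq_mul, mul_comm,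
    Finset.Icc_add_one_left_eq_Ioc]

theorem sum_Ioc_add_const_le_iff (b : ℕ → ℝ) (c : ℝ) {m n : ℕ} (h : m ≤ n) :
    ∑ j ∈ Finset.Ioc 0 n, (b j + c) ≤ ∑ j ∈ Finset.Ioc 0 m, (b j + c) ↔
      ∑ j ∈ Finset.Icc (m + 1) n, b j ≤ -c * (n - m : ℕ) := by
  rw [← Finset.sum_Ioc_consecutive _ (Nat.zero_le m) h, add_le_iff_nonpos_right,
    sum_Ioc_add_const, neg_mul, le_neg_iff_add_nonpos_right]

theorem hypTimes_eq_recordMinima_inter_Ici (a : ℝ) (b : ℕ → ℝ) :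
    hypTimes a b = recordMinima (fun n => ∑ j ∈ Finset.Ioc 0 n, (b j + a / 2)) ∩ Set.Ici 1 := by
  ext n
  refine ⟨fun ⟨hn, h⟩ => ⟨fun m hm => ?_, hn⟩, fun ⟨h, hn⟩ => ⟨hn, fun k hk1 hkn => ?_⟩⟩
  · have := h (n - m) (by omega) (by omega)
    rwa [Nat.sub_sub_self hm.le, ← sum_Ioc_add_const_le_iff _ _ hm.le] at this
  · have := (sum_Ioc_add_const_le_iff b (a / 2) (Nat.sub_le n k)).mp (h (n - k) (by omega))
    rwa [Nat.sub_sub_self hkn] at this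

theorem eventually_sum_Icc_lt_of_limsup_lt {b : ℕ → ℝ} {B c : ℝ} (hb : ∀ j, 1 ≤ j → b j ≤ B)
    (h : limsup (fun n : ℕ => (1 / (n : ℝ)) * ∑ j ∈ Finset.Icc 1 n, b j) atTop < c) :
    ∀ᶠ n : ℕ in atTop, ∑ j ∈ Finset.Icc 1 n, b j < c * n := by
  have hbdd : IsBoundedUnder (· ≤ ·) atTop
      (fun n : ℕ => (1 / (n : ℝ)) * ∑ j ∈ Finset.Icc 1 n, b j) := by
    refine ⟨B, eventually_map.mpr ?_⟩
    filter_upwards [eventually_gt_atTop 0] with n hn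
    have hsum := Finset.sum_le_card_nsmul (Finset.Icc 1 n) b B
      fun j hj => hb j (Finset.mem_Icc.mp hj).1
    rw [Nat.card_Icc, Nat.add_sub_cancel, nsmul_eq_mul] at hsum
    rw [one_div, inv_mul_le_iff₀ (by positivity)]
    exact hsum
  filter_upwards [eventually_lt_of_limsup_lt h hbdd, eventually_gt_atTop 0] with n hlt hn
  rwa [one_div, inv_mul_lt_iff₀ (by positivity), mul_comm] at hlt

theorem le_liminf_ncard_inter_Icc_div {H : Set ℕ} {ρ : ℝ}
    (h : ∀ᶠ n : ℕ in atTop, ρ ≤ (H ∩ Set.Icc 1 n).ncard / n) :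
    ρ ≤ liminf (fun n : ℕ => ((H ∩ Set.Icc 1 n).ncard : ℝ) / n) atTop := by
  refine le_liminf_of_le (isBoundedUnder_of ⟨1, fun n => ?_⟩).isCoboundedUnder_ge h
  refine div_le_one_of_le₀ ?_ n.cast_nonneg
  have := Set.ncard_inter_le_ncard_right H (Set.Icc 1 n)
  rw [Set.ncard_Icc_nat, Nat.add_sub_cancel] at this
  exact_mod_cast this

theorem Set.infinite_of_eventually_le_ncard_inter_Icc_div {H : Set ℕ} {ρ : ℝ} (hρ : 0 < ρ)
    (h : ∀ᶠ n : ℕ in atTop, ρ ≤ (H ∩ Set.Icc 1 n).ncard / n) : H.Infinite := by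
  intro hfin
  have hsmall : ∀ᶠ n : ℕ in atTop, (H.ncard : ℝ) / n < ρ :=
    (tendsto_const_div_atTop_nhds_zero_nat _).eventually (gt_mem_nhds hρ)
  obtain ⟨n, hρn, hn⟩ := (h.and hsmall).exists
  have hle : ((H ∩ Set.Icc 1 n).ncard : ℝ) ≤ H.ncard := by
    exact_mod_cast Set.ncard_inter_le_ncard_left H _ hfin
  linarith [div_le_div_of_nonneg_right hle n.cast_nonneg]

theorem eventually_le_ncard_hypTimes_inter_Icc_div {a B : ℝ} (ha : 0 < a) (hB : 0 < B)
    {b : ℕ → ℝ} (hb : ∀ j, 1 ≤ j → |b j| ≤ B)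
    (hlim : limsup (fun n : ℕ => (1 / (n : ℝ)) * ∑ j ∈ Finset.Icc 1 n, b j) atTop < -a) :
    ∀ᶠ n : ℕ in atTop, a / (2 * B) ≤ (hypTimes a b ∩ Set.Icc 1 n).ncard / n := by
  set S : ℕ → ℝ := fun n => ∑ j ∈ Finset.Ioc 0 n, (b j + a / 2) with hS
  have hstep (n : ℕ) : S n - B ≤ S (n + 1) := by
    have := neg_le_of_abs_le (hb (n + 1) n.succ_pos)
    simp only [hS, Finset.sum_Ioc_succ_top n.zero_le]
    linarith
  have hrec (n : ℕ) : hypTimes a b ∩ Set.Icc 1 n = recordMinima S ∩ Set.Icc 1 n := by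
    rw [hypTimes_eq_recordMinima_inter_Ici, Set.inter_assoc,
      Set.inter_eq_right.mpr Set.Icc_subset_Ici_self]
  filter_upwards [eventually_sum_Icc_lt_of_limsup_lt (fun j hj => (le_abs_self _).trans (hb j hj))
    hlim, eventually_gt_atTop 0] with n hsum hn
  have hlow := sub_ncard_recordMinima_mul_le hstep (le_refl n)
  have hSn : S n = ∑ j ∈ Finset.Icc 1 n, b j + a / 2 * n := by
    simp only [hS, sum_Ioc_add_const, zero_add, Nat.sub_zero]
  rw [hrec, div_le_div_iff₀ (by positivity) (by positivity)]
  simp only [hS, Finset.Ioc_self, Finset.sum_empty] at hlow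
  linarith

/-- Pliss lemma: for all `a, B > 0` there is `ρ > 0` such that any sequence bounded by `B`
with `limsup (1/n)·Σ_{j=1}^n b_j < -a` has a set of `(a/2)`-hyperbolic times of lower density
at least `ρ`; in particular this set is infinite. -/
theorem pliss_hyperbolic_times (a B : ℝ) (ha : 0 < a) (hB : 0 < B) :
    ∃ ρ : ℝ, 0 < ρ ∧ ∀ b : ℕ → ℝ,
      (∀ j : ℕ, 1 ≤ j → |b j| ≤ B) →
      limsup (fun n : ℕ => (1 / (n : ℝ)) * ∑ j ∈ Finset.Icc 1 n, b j) atTop < -a →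
      (ρ ≤ liminf
          (fun n : ℕ => ((hypTimes a b ∩ Set.Icc 1 n).ncard : ℝ) / (n : ℝ)) atTop ∧
        (hypTimes a b).Infinite) := by
  refine ⟨a / (2 * B), by positivity, fun b hb hlim => ?_⟩
  have hdense := eventually_le_ncard_hypTimes_inter_Icc_div ha hB hb hlim
  exact ⟨le_liminf_ncard_inter_Icc_div hdense,
    Set.infinite_of_eventually_le_ncard_inter_Icc_div (by positivity) hdense⟩
end

section
/- Let X be a compact topological space, f : X → X a continuous map, and φ : X → ℝ a continuous function. Suppose that for every x ∈ X there exists an integer n ≥ 1 with Σ_{i=0}^{n-1} φ(f^i(x)) < 0. Then there exist a real constant C and ε > 0 such that Σ_{i=0}^{n-1} φ(f^i(x)) ≤ C - ε·n for every x ∈ X and every integer n ≥ 1. -/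
/-!
By compactness the hypothesis holds uniformly: there are `N` and `δ > 0` such that every point
has a Birkhoff sum of some length `m ∈ [1, N]` that is at most `-δ`. Cutting an orbit segment
greedily into such blocks, each block loses at least `δ` in at most `N` steps, hence at rate
`δ / N`, while the last piece, of length at most `N`, contributes at most `N · max φ`.
-/

open Set

theorem continuous_birkhoffSum {α M : Type*} [TopologicalSpace α] [AddCommMonoid M]
    [TopologicalSpace M] [ContinuousAdd M] {f : α → α} {g : α → M} (hf : Continuous f)
    (hg : Continuous g) (n : ℕ) : Continuous (birkhoffSum f g n) :=
  continuous_finsetSum _ fun k _ => hg.comp (hf.iterate k)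

theorem birkhoffSum_le_nsmul {α M : Type*} [AddCommMonoid M] [PartialOrder M]
    [IsOrderedAddMonoid M] {f : α → α} {g : α → M} {c : M} (hg : ∀ x, g x ≤ c) (n : ℕ)
    (x : α) : birkhoffSum f g n x ≤ n • c :=
  (Finset.sum_le_card_nsmul _ _ _ fun k _ => hg _).trans_eq (by rw [Finset.card_range])

theorem exists_uniform_of_forall_exists_neg {X : Type*} [TopologicalSpace X] [CompactSpace X]
    {g : ℕ → X → ℝ} (hg : ∀ n, Continuous (g n)) (h : ∀ x, ∃ n, g n x < 0) :
    ∃ N : ℕ, ∃ δ > 0, ∀ x, ∃ n ≤ N, g n x < -δ := by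
  set U : ℕ → Set X := fun K => ⋃ n ≤ K, g n ⁻¹' Iio (-((K : ℝ) + 1)⁻¹)
  have hU_open : ∀ K, IsOpen (U K) := fun K =>
    isOpen_biUnion fun n _ => isOpen_Iio.preimage (hg n)
  have hU_mono : Monotone U := fun K L hKL =>
    iUnion₂_mono' fun n hn => ⟨n, hn.trans hKL, preimage_mono (Iio_subset_Iio (by gcongr))⟩
  have hU_cover : univ ⊆ ⋃ K, U K := fun x _ => by
    obtain ⟨n, hn⟩ := h x
    obtain ⟨k, hk⟩ := exists_nat_one_div_lt (neg_pos.2 hn)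
    have : ((max n k : ℕ) + 1 : ℝ)⁻¹ ≤ 1 / ((k : ℝ) + 1) := by
      rw [one_div]; gcongr; exact_mod_cast le_max_right n k
    refine mem_iUnion.2 ⟨max n k, mem_iUnion₂.2 ⟨n, le_max_left n k, ?_⟩⟩
    rw [mem_preimage, mem_Iio]
    linarith
  obtain ⟨N, hN⟩ :=
    isCompact_univ.elim_directed_cover U hU_open hU_cover hU_mono.directed_le
  refine ⟨N, ((N : ℝ) + 1)⁻¹, by positivity, fun x => ?_⟩
  obtain ⟨n, hn, hx⟩ := mem_iUnion₂.1 (hN (mem_univ x))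
  exact ⟨n, hn, hx⟩

theorem birkhoffSum_le_of_forall_exists_le_neg {α : Type*} {f : α → α} {φ : α → ℝ} {M δ : ℝ}
    {N : ℕ} (hM : 0 ≤ M) (hφ : ∀ x, φ x ≤ M) (hδ : 0 ≤ δ)
    (h : ∀ x, ∃ m, 1 ≤ m ∧ m ≤ N ∧ birkhoffSum f φ m x ≤ -δ) (n : ℕ) (x : α) :
    birkhoffSum f φ n x ≤ N * M + δ - δ / N * n := by
  have hrate : ∀ m ≤ N, δ / N * m ≤ δ := fun m hm =>
    calc δ / N * m = δ * (m / N) := by ring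
      _ ≤ δ :=
        mul_le_of_le_one_right hδ (div_le_one_of_le₀ (by exact_mod_cast hm) N.cast_nonneg)
  induction n using Nat.strong_induction_on generalizing x with
  | _ n ih =>
    by_cases hnN : n ≤ N
    · calc birkhoffSum f φ n x ≤ n * M := by simpa using birkhoffSum_le_nsmul hφ n x
        _ ≤ N * M := by gcongr
        _ ≤ N * M + δ - δ / N * n := by linarith [hrate n hnN]
    · obtain ⟨m, hm, hmN, hmx⟩ := h x
      obtain ⟨k, rfl⟩ : ∃ k, n = m + k := ⟨n - m, by omega⟩
      have hk := ih k (by omega) (f^[m] x)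
      rw [birkhoffSum_add]
      push_cast
      linarith [hrate m hmN]

/-- If every orbit of a continuous map `f` on a compact space has some Birkhoff sum of the
continuous function `φ` that is negative, then all Birkhoff sums satisfy a uniform linear
bound `Σ_{i<n} φ(fⁱx) ≤ C - ε·n`. -/
theorem birkhoff_uniform_decay {X : Type*} [TopologicalSpace X] [CompactSpace X]
    (f : X → X) (hf : Continuous f) (φ : X → ℝ) (hφ : Continuous φ)
    (h : ∀ x : X, ∃ n : ℕ, 1 ≤ n ∧ ∑ i ∈ Finset.range n, φ (f^[i] x) < 0) :
    ∃ C ε : ℝ, 0 < ε ∧ ∀ x : X, ∀ n : ℕ, 1 ≤ n →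
      ∑ i ∈ Finset.range n, φ (f^[i] x) ≤ C - ε * n := by
  obtain ⟨N, δ, hδ, hN⟩ := exists_uniform_of_forall_exists_neg
    (g := fun n => birkhoffSum f φ (n + 1)) (fun n => continuous_birkhoffSum hf hφ _)
    fun x => by
      obtain ⟨n, hn, hneg⟩ := h x
      exact ⟨n - 1, by rwa [Nat.sub_add_cancel hn]⟩
  obtain ⟨M, hM⟩ := (isCompact_range hφ).bddAbove
  refine ⟨((N + 1 : ℕ) : ℝ) * max M 0 + δ, δ / (N + 1 : ℕ), by positivity, fun x n _ => ?_⟩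
  refine birkhoffSum_le_of_forall_exists_le_neg (le_max_right M 0)
    (fun y => (hM ⟨y, rfl⟩).trans (le_max_left M 0)) hδ.le (fun y => ?_) n x
  obtain ⟨m, hmN, hm⟩ := hN y
  exact ⟨m + 1, by omega, by omega, hm.le⟩
end
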